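/- arXiv:2009.14471 — 6 statements merged into one kernel-verified Lean document; each statement's English description precedes it below -/
import Mathlib

section
/- Let S be a finite set, A = A₁ × ⋯ × A_N a finite product of action sets, and P : S × A × S → [0,1] with ∑_{s'∈S} P(s,a,s') = 1 for all s, a. On S' = S × A define the deterministic queueing maps T_i(( s, a₁,…,a_i,…,a_N), a'_i) = (s, a₁,…,a'_i,…,a_N) and the environment kernel P'((s,a),(s',a')) = P(s,a,s')·[a = a']. Fix a joint action a* = (a*₁,…,a*_N) ∈ A and a probability distribution μ on S. Let μ' be the distribution on S' with μ'(s, b) = μ(s) for one fixed tuple b ∈ A (and 0 elsewhere), let σ ↦ T_i(σ, a*_i) be applied as a pushforward successively for i = 1,…,N to μ', and let μ'' be the result of then applying P' (i.e., μ''(σ') = ∑_{σ∈S'} (pushforward distribution)(σ)·P'(σ,σ')). Then μ'' is supported on pairs (s', a*) whose action component equals a*, and for every s' ∈ S, ∑_{a'∈A} μ''(s', a') = μ''(s', a*) = ∑_{s∈S} μ(s)·P(s, a*, s'). That is, one full agent-environment cycle of the constructed AEC game reproduces exactly one transition step of the POSG in distribution. -/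
/-!
Queueing the actions `astar i` one agent at a time is a deterministic map on the action
component, so it sends a distribution concentrated on the action tuple `c` to one concentrated on
`update c i (astar i)`, with the same state marginal `μ`. After all `N` agents have moved the tuple
is `astar`, whatever `b` was, and the environment kernel, which keeps the queued tuple, then just
applies `P (·) astar (·)` to `μ`.
-/

open Finset

section Pushforward

variable {S B M : Type*} [Fintype S] [Fintype B] [DecidableEq S] [DecidableEq B]
  [AddCommMonoid M]

lemma sum_ite_prodMk_eq_ite (g : B → B) (μ : S → M) (c : B) (σ' : S × B) :
    ∑ σ : S × B, (if (σ.1, g σ.2) = σ' then (if σ.2 = c then μ σ.1 else 0) else 0)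
      = if σ'.2 = g c then μ σ'.1 else 0 := by
  rw [Fintype.sum_prod_type, Finset.sum_eq_single σ'.1, Finset.sum_eq_single c] <;> aesop

lemma foldl_pushforward_eq_ite {ι : Type*} (g : ι → B → B) (μ : S → M) (l : List ι) (c : B) :
    l.foldl (fun m i σ' => ∑ σ : S × B, if (σ.1, g i σ.2) = σ' then m σ else 0)
        (fun σ => if σ.2 = c then μ σ.1 else 0)
      = fun σ => if σ.2 = l.foldl (fun c i => g i c) c then μ σ.1 else 0 := by
  induction l generalizing c with
  | nil => rfl
  | cons i l ih =>
    simp only [List.foldl_cons, sum_ite_prodMk_eq_ite, ih]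
    rfl

end Pushforward

lemma foldl_update_apply {ι : Type*} [DecidableEq ι] {β : ι → Type*} (f : ∀ i, β i)
    (l : List ι) (c : ∀ i, β i) (j : ι) :
    l.foldl (fun c i => Function.update c i (f i)) c j = if j ∈ l then f j else c j := by
  induction l generalizing c with
  | nil => simp
  | cons i l ih =>
    rw [List.foldl_cons, ih]
    by_cases hj : j = i
    · subst hj
      simp
    · simp [hj]

lemma foldl_update_finRange {N : ℕ} {β : Fin N → Type*} (f c : ∀ i, β i) :
    (List.finRange N).foldl (fun c i => Function.update c i (f i)) c = f := by
  funext j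
  simp [foldl_update_apply]

lemma sum_ite_mul_ite {S B R : Type*} [Fintype S] [Fintype B] [DecidableEq B]
    [NonUnitalNonAssocSemiring R] (μ : S → R) (P : S → B → S → R) (c a' : B) (s' : S) :
    ∑ σ : S × B, (if σ.2 = c then μ σ.1 else 0) * (if σ.2 = a' then P σ.1 σ.2 s' else 0)
      = if c = a' then ∑ s, μ s * P s c s' else 0 := by
  rw [Fintype.sum_prod_type]
  by_cases h : c = a' <;> simp [ite_mul, h, eq_comm]

theorem posg_to_aec_one_cycle_general
    {S : Type*} [Fintype S] [DecidableEq S] {N : ℕ} {A : Fin N → Type*}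
    [∀ i, Fintype (A i)] [∀ i, DecidableEq (A i)]
    (P : S → (∀ i, A i) → S → ℝ)
    (μ : S → ℝ)
    (b astar : ∀ i, A i) :
    -- initial distribution on S' = S × A, queueing the arbitrary fixed tuple b
    let μ0 : S × (∀ i, A i) → ℝ := fun σ => if σ.2 = b then μ σ.1 else 0
    -- pushforward under the deterministic queueing map T_i(·, astar i)
    let push : Fin N → (S × (∀ i, A i) → ℝ) → (S × (∀ i, A i) → ℝ) :=
      fun i m σ' => ∑ σ : S × (∀ i, A i),
        if (σ.1, Function.update σ.2 i (astar i)) = σ' then m σ else 0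
    -- apply the pushforwards successively for i = 1, …, N
    let ν : S × (∀ i, A i) → ℝ := (List.finRange N).foldl (fun m i => push i m) μ0
    -- then apply the environment kernel P'((s,a),(s',a')) = P(s,a,s')·[a = a']
    let μ'' : S × (∀ i, A i) → ℝ := fun σ' =>
      ∑ σ : S × (∀ i, A i), ν σ * (if σ.2 = σ'.2 then P σ.1 σ.2 σ'.1 else 0)
    (∀ (s' : S) (a' : ∀ i, A i), a' ≠ astar → μ'' (s', a') = 0) ∧
    (∀ s' : S,
        (∑ a' : ∀ i, A i, μ'' (s', a')) = μ'' (s', astar) ∧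
        μ'' (s', astar) = ∑ s : S, μ s * P s astar s') := by
  intro μ0 push ν μ''
  have hν : ν = fun σ => if σ.2 = astar then μ σ.1 else 0 := by
    have h := foldl_pushforward_eq_ite (fun i a => Function.update a i (astar i)) μ
      (List.finRange N) b
    rwa [foldl_update_finRange] at h
  have hμ'' : ∀ s' a', μ'' (s', a') = if astar = a' then ∑ s, μ s * P s astar s' else 0 :=
    fun s' a' => by simp only [μ'', hν, sum_ite_mul_ite]
  refine ⟨fun s' a' ha => by simp [hμ'', Ne.symm ha], fun s' => ⟨?_, by simp [hμ'']⟩⟩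
  simp [hμ'']

theorem posg_to_aec_one_cycle
    {S : Type*} [Fintype S] [DecidableEq S] {N : ℕ} {A : Fin N → Type*}
    [∀ i, Fintype (A i)] [∀ i, DecidableEq (A i)]
    (P : S → (∀ i, A i) → S → ℝ)
    (hP0 : ∀ s a s', 0 ≤ P s a s')
    (hP1 : ∀ s a s', P s a s' ≤ 1)
    (hPsum : ∀ s a, ∑ s' : S, P s a s' = 1)
    (μ : S → ℝ) (hμ0 : ∀ s, 0 ≤ μ s) (hμsum : ∑ s : S, μ s = 1)
    (b astar : ∀ i, A i) :
    -- initial distribution on S' = S × A, queueing the arbitrary fixed tuple b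
    let μ0 : S × (∀ i, A i) → ℝ := fun σ => if σ.2 = b then μ σ.1 else 0
    -- pushforward under the deterministic queueing map T_i(·, astar i)
    let push : Fin N → (S × (∀ i, A i) → ℝ) → (S × (∀ i, A i) → ℝ) :=
      fun i m σ' => ∑ σ : S × (∀ i, A i),
        if (σ.1, Function.update σ.2 i (astar i)) = σ' then m σ else 0
    -- apply the pushforwards successively for i = 1, …, N
    let ν : S × (∀ i, A i) → ℝ := (List.finRange N).foldl (fun m i => push i m) μ0
    -- then apply the environment kernel P'((s,a),(s',a')) = P(s,a,s')·[a = a']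
    let μ'' : S × (∀ i, A i) → ℝ := fun σ' =>
      ∑ σ : S × (∀ i, A i), ν σ * (if σ.2 = σ'.2 then P σ.1 σ.2 σ'.1 else 0)
    (∀ (s' : S) (a' : ∀ i, A i), a' ≠ astar → μ'' (s', a') = 0) ∧
    (∀ s' : S,
        (∑ a' : ∀ i, A i, μ'' (s', a')) = μ'' (s', astar) ∧
        μ'' (s', astar) = ∑ s : S, μ s * P s astar s') :=
  posg_to_aec_one_cycle_general P μ b astar
end

section
/- (Every POSG has an equivalent AEC game — state-distribution equivalence.) Let a POSG be given with finite state set S, initial state s₀, finite action sets A₁,…,A_N, and transition function P with ∑_{s'} P(s,a,s') = 1, and construct the AEC game on S' = S × A₁ × ⋯ × A_N with queueing maps T_i and environment kernel P'((s,a),(s',a')) = P(s,a,s')·[a = a'] as above. Fix any sequence of joint actions (aᵗ)_{t≥0} with aᵗ ∈ A₁ × ⋯ × A_N. Define POSG state distributions ρ_t on S by ρ₀ = δ_{s₀} and ρ_{t+1}(s') = ∑_{s∈S} ρ_t(s)·P(s, aᵗ, s'). Define distributions μ_k on S' by μ₀ = δ_{(s₀, b)} for a fixed arbitrary b; for k =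 t(N+1) + i with 1 ≤ i ≤ N, μ_k is the pushforward of μ_{k−1} under σ ↦ T_i(σ, aᵗ_i); and for k = (t+1)(N+1), μ_k(σ') = ∑_{σ∈S'} μ_{k−1}(σ)·P'(σ, σ'). Then for every t ≥ 0 and every s ∈ S, ρ_t(s) = ∑_{a ∈ A₁×⋯×A_N} μ_{t(N+1)}(s, a); i.e., the probability that the POSG is in state s after t steps equals the probability that the S-component of the constructed AEC game equals s after t(N+1) steps. -/
/-!
STATEMENT 2 (Every POSG has an equivalent AEC game — state-distribution
equivalence): with `ρ_t` the POSG state distribution after `t` steps under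
the joint-action sequence `(aᵗ)`, and `μ_k` the distribution of the
constructed AEC game after `k` steps (N queueing steps via the `T_i`
followed by one environment step `P'` per cycle, starting from
`δ_{(s₀,b)}`), for every `t` and every `s ∈ S`,
`ρ_t(s) = ∑_a μ_{t(N+1)}(s, a)`.

Step `k+1` of the AEC game: writing `k = t(N+1) + j` with `0 ≤ j ≤ N`
(so `t = k / (N+1)` and `j = k % (N+1)`), if `j < N` then agent `j+1`
(0-indexed: `⟨j, _⟩ : Fin N`) queues its action `aᵗ_{j+1}`, and if `j = N`
then the environment kernel `P'` is applied.
-/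

open Finset

theorem posg_to_aec_state_distribution_equiv
    {S : Type*} [Fintype S] [DecidableEq S] {N : ℕ} {A : Fin N → Type*}
    [∀ i, Fintype (A i)] [∀ i, DecidableEq (A i)]
    (P : S → (∀ i, A i) → S → ℝ)
    (hP0 : ∀ s a s', 0 ≤ P s a s')
    (hPsum : ∀ s a, ∑ s' : S, P s a s' = 1)
    (s0 : S) (b : ∀ i, A i)
    -- the fixed sequence of joint actions (aᵗ)ₜ
    (a : ℕ → ∀ i, A i)
    -- the POSG state distributions ρ_t
    (ρ : ℕ → S → ℝ)
    (hρ0 : ∀ s, ρ 0 s = if s = s0 then 1 else 0)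
    (hρstep : ∀ t s', ρ (t + 1) s' = ∑ s : S, ρ t s * P s (a t) s')
    -- the AEC game state distributions μ_k on S' = S × A
    (μ : ℕ → S × (∀ i, A i) → ℝ)
    (hμ0 : ∀ σ, μ 0 σ = if σ = (s0, b) then 1 else 0)
    (hμstep : ∀ k,
      if h : k % (N + 1) < N then
        -- queueing step: pushforward under T_{j+1}(·, aᵗ_{j+1})
        ∀ σ', μ (k + 1) σ' = ∑ σ : S × (∀ i, A i),
          if (σ.1, Function.update σ.2 ⟨k % (N + 1), h⟩
                (a (k / (N + 1)) ⟨k % (N + 1), h⟩)) = σ'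
          then μ k σ else 0
      else
        -- environment step: apply P'((s,a),(s',a')) = P(s,a,s')·[a = a']
        ∀ σ', μ (k + 1) σ' = ∑ σ : S × (∀ i, A i),
          μ k σ * (if σ.2 = σ'.2 then P σ.1 σ.2 σ'.1 else 0)) :
    ∀ t (s : S), ρ t s = ∑ a' : ∀ i, A i, μ (t * (N + 1)) (s, a') := by

  have key : ∀ t j, j ≤ N →
      (∀ (s : S) (c : ∀ i, A i), (∃ i : Fin N, i.1 < j ∧ c i ≠ a t i) →
        μ (t * (N + 1) + j) (s, c) = 0) ∧
      (∀ s : S, ∑ c : ∀ i, A i, μ (t * (N + 1) + j) (s, c)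
          = ∑ c : ∀ i, A i, μ (t * (N + 1)) (s, c)) := by
    intro t j
    induction j with
    | zero =>
      intro _
      exact ⟨fun s c ⟨i, hi, _⟩ => absurd hi (Nat.not_lt_zero _), fun s => rfl⟩
    | succ j ih =>
      intro hj
      obtain ⟨ihc, ihm⟩ := ih (Nat.le_of_succ_le hj)
      have hjN : j < N := hj
      have hmod : (t * (N + 1) + j) % (N + 1) = j := by
        rw [add_comm, Nat.add_mul_mod_self_right]
        exact Nat.mod_eq_of_lt (by omega)
      have hdiv : (t * (N + 1) + j) / (N + 1) = t := by
        rw [mul_comm, Nat.mul_add_div (by omega)]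
        simp [Nat.div_eq_of_lt (show j < N + 1 by omega)]
      have hlt : (t * (N + 1) + j) % (N + 1) < N := by rw [hmod]; exact hjN
      have hstep := hμstep (t * (N + 1) + j)
      rw [dif_pos hlt] at hstep
      rw [show (⟨(t * (N + 1) + j) % (N + 1), hlt⟩ : Fin N) = ⟨j, hjN⟩ from Fin.ext hmod,
        hdiv] at hstep
      constructor
      · rintro s c ⟨i, hi, hne⟩
        rw [← Nat.add_assoc, hstep (s, c)]
        apply Finset.sum_eq_zero
        intro σ _
        split_ifs with h
        · obtain ⟨h1, h2⟩ := Prod.mk.injEq .. ▸ h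
          rcases Nat.lt_succ_iff_lt_or_eq.mp hi with hi' | hi'
          · refine ihc σ.1 σ.2 ⟨i, hi', ?_⟩
            have hij : i ≠ (⟨j, hjN⟩ : Fin N) := by
              intro hcontra; rw [hcontra] at hi'; exact absurd hi' (lt_irrefl _)
            have : σ.2 i = c i := by
              rw [← h2, Function.update_of_ne hij]
            rw [this]; exact hne
          · exfalso
            have hiF : i = (⟨j, hjN⟩ : Fin N) := Fin.ext hi'
            apply hne
            rw [← h2, hiF, Function.update_self]
        · rfl
      · intro s
        rw [← Nat.add_assoc]
        calc ∑ c : ∀ i, A i, μ (t * (N + 1) + j + 1) (s, c)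
            = ∑ c : ∀ i, A i, ∑ σ : S × (∀ i, A i),
                if (σ.1, Function.update σ.2 ⟨j, hjN⟩ (a t ⟨j, hjN⟩)) = (s, c)
                then μ (t * (N + 1) + j) σ else 0 := by
              exact Finset.sum_congr rfl fun c _ => hstep (s, c)
          _ = ∑ σ : S × (∀ i, A i), ∑ c : ∀ i, A i,
                if (σ.1, Function.update σ.2 ⟨j, hjN⟩ (a t ⟨j, hjN⟩)) = (s, c)
                then μ (t * (N + 1) + j) σ else 0 := Finset.sum_comm
          _ = ∑ σ : S × (∀ i, A i),
                if σ.1 = s then μ (t * (N + 1) + j) σ else 0 := by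
              refine Finset.sum_congr rfl fun σ _ => ?_
              simp only [Prod.mk.injEq, ite_and]
              by_cases h : σ.1 = s
              · simp only [h, if_true]
                rw [Finset.sum_ite_eq]
                simp
              · simp [h]
          _ = ∑ c : ∀ i, A i, μ (t * (N + 1) + j) (s, c) := by
              rw [Fintype.sum_prod_type]
              rw [Finset.sum_eq_single s]
              · simp
              · intro s'' _ hs''; simp [hs'']
              · intro h; exact absurd (Finset.mem_univ s) h
          _ = ∑ c : ∀ i, A i, μ (t * (N + 1)) (s, c) := ihm s
  intro t
  induction t with
  | zero =>
    intro s
    simp only [Nat.zero_mul, hρ0, hμ0, Prod.mk.injEq]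
    by_cases h : s = s0
    · subst h
      simp [Finset.sum_ite_eq]
    · simp [h]
  | succ t ih =>
    intro s'
    obtain ⟨hconc, hmarg⟩ := key t N le_rfl
    have hmod : (t * (N + 1) + N) % (N + 1) = N := by
      rw [add_comm, Nat.add_mul_mod_self_right]
      exact Nat.mod_eq_of_lt (by omega)
    have hstep := hμstep (t * (N + 1) + N)
    rw [dif_neg (by rw [hmod]; exact lt_irrefl N)] at hstep
    have hsucc : (t + 1) * (N + 1) = t * (N + 1) + N + 1 := by ring
    rw [hρstep]
    calc ∑ s : S, ρ t s * P s (a t) s'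
        = ∑ s : S, (∑ c : ∀ i, A i, μ (t * (N + 1)) (s, c)) * P s (a t) s' := by
          exact Finset.sum_congr rfl fun s _ => by rw [ih s]
      _ = ∑ s : S, (∑ c : ∀ i, A i, μ (t * (N + 1) + N) (s, c)) * P s (a t) s' := by
          exact Finset.sum_congr rfl fun s _ => by rw [hmarg s]
      _ = ∑ s : S, ∑ c : ∀ i, A i, μ (t * (N + 1) + N) (s, c) * P s c s' := by
          refine Finset.sum_congr rfl fun s _ => ?_
          rw [Finset.sum_mul]
          refine Finset.sum_congr rfl fun c _ => ?_
          by_cases hc : c = a t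
          · rw [hc]
          · obtain ⟨i, hi⟩ := Function.ne_iff.mp hc
            rw [hconc s c ⟨i, i.2, hi⟩]
            ring
      _ = ∑ σ : S × (∀ i, A i), μ (t * (N + 1) + N) σ * P σ.1 σ.2 s' := by
          rw [Fintype.sum_prod_type]
      _ = ∑ σ : S × (∀ i, A i), ∑ c' : ∀ i, A i,
            μ (t * (N + 1) + N) σ * (if σ.2 = c' then P σ.1 σ.2 s' else 0) := by
          refine Finset.sum_congr rfl fun σ _ => ?_
          rw [← Finset.mul_sum]
          congr 1
          rw [Finset.sum_ite_eq]
          simp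
      _ = ∑ c' : ∀ i, A i, ∑ σ : S × (∀ i, A i),
            μ (t * (N + 1) + N) σ * (if σ.2 = c' then P σ.1 σ.2 s' else 0) :=
          Finset.sum_comm
      _ = ∑ c' : ∀ i, A i, μ ((t + 1) * (N + 1)) (s', c') := by
          refine Finset.sum_congr rfl fun c' _ => ?_
          rw [hsucc, hstep (s', c')]
end

section
/- (Every POSG has an equivalent AEC game — reward equivalence.) Let a POSG with finite state set S, finite action sets A₁,…,A_N, transition function P (with ∑_{s'} P(s,a,s') = 1), and reward functions R_i : S × (∏_j A_j) × S → ℝ be given, and construct the AEC game on S' = S × ∏_j A_j as above, where agent i receives reward 0 at each of the N agent (queueing) steps of a cycle and receives reward R_i(s, a, s') with probability 1 at the environment step transitioning from (s, a) to (s', a). Fix a sequence of joint actions (aᵗ)_{t≥0} and let ρ_t be the POSG state distribution after t steps (ρ₀ = δ_{s₀}, ρ_{t+1}(s') = ∑_s ρ_t(s)·P(s,aᵗ,s')). Then for every t and every agent i, the expected total reward received by agent i in the constructed AEC game over the N+1 steps t(N+1)+1, …, (t+1)(N+1) equals ∑_{s∈S} ∑_{s'∈S} ρ_t(s)·P(s,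 aᵗ, s')·R_i(s, aᵗ, s'), which is exactly the expected reward received by agent i at step t of the POSG. -/
/-!
STATEMENT 3 (Every POSG has an equivalent AEC game — reward equivalence):
in the AEC game constructed from a POSG, agent `i` receives reward 0 on each
of the `N` queueing steps of a cycle and reward `R_i(s, a, s')` with
probability 1 on the environment step from `(s,a)` to `(s',a)`. Hence the
expected total reward received by agent `i` during the cycle of steps
`t(N+1)+1, …, (t+1)(N+1)` — which is just the expected reward of the final
environment step, taken under the distribution `μ_{t(N+1)+N}` and the kernel
`P'` — equals `∑_s ∑_{s'} ρ_t(s) · P(s, aᵗ, s') · R_i(s, aᵗ, s')`, the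
expected reward received by agent `i` at step `t` of the POSG.
-/

open Finset

theorem posg_to_aec_reward_equiv
    {S : Type*} [Fintype S] [DecidableEq S] {N : ℕ} {A : Fin N → Type*}
    [∀ i, Fintype (A i)] [∀ i, DecidableEq (A i)]
    (P : S → (∀ i, A i) → S → ℝ)
    (hP0 : ∀ s a s', 0 ≤ P s a s')
    (hPsum : ∀ s a, ∑ s' : S, P s a s' = 1)
    -- POSG reward functions R_i
    (R : Fin N → S → (∀ i, A i) → S → ℝ)
    (s0 : S) (b : ∀ i, A i)
    -- the fixed sequence of joint actions (aᵗ)ₜ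
    (a : ℕ → ∀ i, A i)
    -- the POSG state distributions ρ_t
    (ρ : ℕ → S → ℝ)
    (hρ0 : ∀ s, ρ 0 s = if s = s0 then 1 else 0)
    (hρstep : ∀ t s', ρ (t + 1) s' = ∑ s : S, ρ t s * P s (a t) s')
    -- the AEC game state distributions μ_k on S' = S × A
    (μ : ℕ → S × (∀ i, A i) → ℝ)
    (hμ0 : ∀ σ, μ 0 σ = if σ = (s0, b) then 1 else 0)
    (hμstep : ∀ k,
      if h : k % (N + 1) < N then
        -- queueing step: pushforward under T_{j+1}(·, aᵗ_{j+1}); reward 0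
        ∀ σ', μ (k + 1) σ' = ∑ σ : S × (∀ i, A i),
          if (σ.1, Function.update σ.2 ⟨k % (N + 1), h⟩
                (a (k / (N + 1)) ⟨k % (N + 1), h⟩)) = σ'
          then μ k σ else 0
      else
        -- environment step: apply P'((s,a),(s',a')) = P(s,a,s')·[a = a']
        ∀ σ', μ (k + 1) σ' = ∑ σ : S × (∀ i, A i),
          μ k σ * (if σ.2 = σ'.2 then P σ.1 σ.2 σ'.1 else 0)) :
    -- the expected total reward of agent i over the cycle (the N queueing
    -- steps give reward 0, so it is the environment-step expectation,
    -- taken at AEC step t(N+1)+N) matches the POSG expected reward at step t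
    ∀ t (i : Fin N),
      (∑ σ : S × (∀ i, A i), ∑ σ' : S × (∀ i, A i),
          μ (t * (N + 1) + N) σ *
            ((if σ.2 = σ'.2 then P σ.1 σ.2 σ'.1 else 0) * R i σ.1 σ.2 σ'.1))
        = ∑ s : S, ∑ s' : S, ρ t s * (P s (a t) s' * R i s (a t) s') := by

  -- `prev t` is the queued action at the start of cycle `t`
  set prev : ℕ → ∀ i, A i := fun t => Nat.rec b (fun t _ => a t) t with hprev
  -- `mix t j` is the queued action after `j` queueing steps of cycle `t`
  set mix : ℕ → ℕ → ∀ i, A i :=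
    fun t j i => if (i : ℕ) < j then a t i else prev t i with hmix
  have hmixN : ∀ t, mix t N = a t := by
    intro t; funext i; simp [hmix, i.isLt]
  have hmix0 : ∀ t, mix t 0 = prev t := by
    intro t; funext i; simp [hmix]
  have hupd : ∀ t j (hj : j < N),
      Function.update (mix t j) ⟨j, hj⟩ (a t ⟨j, hj⟩) = mix t (j + 1) := by
    intro t j hj
    funext i
    by_cases hi : i = ⟨j, hj⟩
    · subst hi; simp [hmix]
    · rw [Function.update_of_ne hi]
      have hne : (i : ℕ) ≠ j := fun h => hi (Fin.ext h)
      simp only [hmix]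
      by_cases h1 : (i : ℕ) < j
      · rw [if_pos h1, if_pos (by omega)]
      · rw [if_neg h1, if_neg (by omega)]
  -- inner induction: within a cycle
  have inner : ∀ t j, j ≤ N →
      (∀ σ, μ (t * (N + 1)) σ = if σ.2 = mix t 0 then ρ t σ.1 else 0) →
      (∀ σ, μ (t * (N + 1) + j) σ = if σ.2 = mix t j then ρ t σ.1 else 0) := by
    intro t j
    induction j with
    | zero => intro _ h0; simpa using h0
    | succ j ih =>
      intro hj h0 σ'
      have hjN : j < N := by omega
      have ihj := ih (by omega) h0
      have hk := hμstep (t * (N + 1) + j)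
      have hmod : (t * (N + 1) + j) % (N + 1) = j := by
        rw [mul_comm, Nat.mul_add_mod, Nat.mod_eq_of_lt (by omega)]
      have hdiv : (t * (N + 1) + j) / (N + 1) = t := by
        rw [mul_comm, Nat.mul_add_div (by omega), Nat.div_eq_of_lt (by omega)]
        omega
      rw [dif_pos (by rw [hmod]; exact hjN)] at hk
      have hk' := hk σ'
      rw [show t * (N + 1) + (j + 1) = t * (N + 1) + j + 1 from rfl, hk']
      have hrw : ∀ σ : S × (∀ i, A i),
          (if (σ.1, Function.update σ.2 ⟨(t * (N + 1) + j) % (N + 1), by rw [hmod]; exact hjN⟩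
                (a ((t * (N + 1) + j) / (N + 1)) ⟨(t * (N + 1) + j) % (N + 1), by rw [hmod]; exact hjN⟩)) = σ'
            then μ (t * (N + 1) + j) σ else 0)
          = (if σ = (σ'.1, mix t j) then
              (if σ'.2 = mix t (j + 1) then ρ t σ'.1 else 0) else 0) := by
        intro σ
        have hidx : (⟨(t * (N + 1) + j) % (N + 1), by rw [hmod]; exact hjN⟩ : Fin N) = ⟨j, hjN⟩ := by
          exact Fin.ext hmod
        rw [ihj σ]
        by_cases h2 : σ.2 = mix t j
        · rw [if_pos h2]
          have : Function.update σ.2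
              (⟨(t * (N + 1) + j) % (N + 1), by rw [hmod]; exact hjN⟩ : Fin N)
              (a ((t * (N + 1) + j) / (N + 1)) ⟨(t * (N + 1) + j) % (N + 1), by rw [hmod]; exact hjN⟩)
              = mix t (j + 1) := by
            rw [hidx, hdiv, h2, hupd t j hjN]
          rw [this]
          by_cases h1 : σ.1 = σ'.1
          · have hσ : σ = (σ'.1, mix t j) := Prod.ext h1 h2
            by_cases h3 : σ'.2 = mix t (j + 1)
            · rw [if_pos (Prod.ext h1 h3.symm : (σ.1, mix t (j + 1)) = σ'),
                if_pos hσ, if_pos h3, h1]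
            · rw [if_neg (fun (h : (σ.1, mix t (j + 1)) = σ') =>
                  h3 ((congrArg Prod.snd h).symm)),
                if_pos hσ, if_neg h3]
          · rw [if_neg (fun (h : (σ.1, mix t (j + 1)) = σ') =>
                h1 (Prod.ext_iff.mp h).1),
              if_neg (fun (h : σ = (σ'.1, mix t j)) => h1 (Prod.ext_iff.mp h).1)]
        · rw [if_neg h2, ite_self,
            if_neg (fun (h : σ = (σ'.1, mix t j)) => h2 (Prod.ext_iff.mp h).2)]
      rw [Finset.sum_congr rfl (fun σ _ => hrw σ), Finset.sum_ite_eq' Finset.univ]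
      simp
  -- outer induction: cycle starts
  have start : ∀ t, ∀ σ, μ (t * (N + 1)) σ = if σ.2 = mix t 0 then ρ t σ.1 else 0 := by
    intro t
    induction t with
    | zero =>
      intro σ
      rw [Nat.zero_mul, hμ0, hρ0, hmix0]
      by_cases h2 : σ.2 = prev 0
      · rw [if_pos h2]
        by_cases h1 : σ.1 = s0
        · rw [if_pos (Prod.ext h1 h2), if_pos h1]
        · rw [if_neg (by intro h; exact h1 (by rw [h])), if_neg h1]
      · rw [if_neg h2, if_neg (by intro h; exact h2 (by rw [h]; rfl))]
    | succ t ih =>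
      intro σ'
      have hmu := inner t N le_rfl ih
      have hk := hμstep (t * (N + 1) + N)
      have hmod : (t * (N + 1) + N) % (N + 1) = N := by
        rw [mul_comm, Nat.mul_add_mod, Nat.mod_eq_of_lt (by omega)]
      rw [dif_neg (by rw [hmod]; omega)] at hk
      have heq : (t + 1) * (N + 1) = t * (N + 1) + N + 1 := by ring
      rw [heq, hk σ']
      have hrw : ∀ σ : S × (∀ i, A i),
          μ (t * (N + 1) + N) σ * (if σ.2 = σ'.2 then P σ.1 σ.2 σ'.1 else 0)
          = if σ.2 = mix t N then
              ρ t σ.1 * (if mix t N = σ'.2 then P σ.1 (mix t N) σ'.1 else 0) else 0 := by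
        intro σ
        rw [hmu σ]
        by_cases h2 : σ.2 = mix t N
        · rw [if_pos h2, if_pos h2, h2]
        · rw [if_neg h2, if_neg h2, zero_mul]
      rw [Finset.sum_congr rfl (fun σ _ => hrw σ)]
      rw [Fintype.sum_prod_type]
      have hcol : ∀ s : S,
          (∑ c : ∀ i, A i, if c = mix t N then
              ρ t s * (if mix t N = σ'.2 then P s (mix t N) σ'.1 else 0) else 0)
          = ρ t s * (if mix t N = σ'.2 then P s (mix t N) σ'.1 else 0) := by
        intro s
        rw [Finset.sum_ite_eq' Finset.univ]
        simp
      rw [Finset.sum_congr rfl (fun s _ => hcol s)]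
      have hm0 : mix (t + 1) 0 = a t := by rw [hmix0]
      by_cases h3 : σ'.2 = a t
      · rw [if_pos (by rw [hm0]; exact h3)]
        rw [hρstep t σ'.1]
        apply Finset.sum_congr rfl
        intro s _
        rw [if_pos ((hmixN t).trans h3.symm), hmixN]
      · rw [if_neg (by rw [hm0]; exact h3)]
        apply Finset.sum_eq_zero
        intro s _
        rw [if_neg (by rw [hmixN]; intro h; exact h3 h.symm), mul_zero]
  -- main computation
  intro t i
  have hmu := inner t N le_rfl (start t)
  have hrw : ∀ σ : S × (∀ i, A i),
      (∑ σ' : S × (∀ i, A i),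
        μ (t * (N + 1) + N) σ *
          ((if σ.2 = σ'.2 then P σ.1 σ.2 σ'.1 else 0) * R i σ.1 σ.2 σ'.1))
      = if σ.2 = a t then
          ρ t σ.1 * ∑ s' : S, P σ.1 (a t) s' * R i σ.1 (a t) s' else 0 := by
    intro σ
    rw [show (∑ σ' : S × (∀ i, A i),
        μ (t * (N + 1) + N) σ *
          ((if σ.2 = σ'.2 then P σ.1 σ.2 σ'.1 else 0) * R i σ.1 σ.2 σ'.1))
      = μ (t * (N + 1) + N) σ * ∑ σ' : S × (∀ i, A i),
          ((if σ.2 = σ'.2 then P σ.1 σ.2 σ'.1 else 0) * R i σ.1 σ.2 σ'.1) from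
      (Finset.mul_sum _ _ _).symm]
    rw [hmu σ, hmixN]
    by_cases h2 : σ.2 = a t
    · rw [if_pos h2, if_pos h2]
      congr 1
      rw [Fintype.sum_prod_type_right]
      have : ∀ c : ∀ i, A i,
          (∑ s' : S, (if σ.2 = c then P σ.1 σ.2 s' else 0) * R i σ.1 σ.2 s')
          = if c = σ.2 then (∑ s' : S, P σ.1 (a t) s' * R i σ.1 (a t) s') else 0 := by
        intro c
        by_cases hc : σ.2 = c
        · rw [if_pos hc.symm]
          apply Finset.sum_congr rfl
          intro s' _
          rw [if_pos hc, h2]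
        · rw [if_neg (fun h => hc h.symm)]
          apply Finset.sum_eq_zero
          intro s' _
          rw [if_neg hc, zero_mul]
      rw [Finset.sum_congr rfl (fun c _ => this c), Finset.sum_ite_eq' Finset.univ]
      simp
    · rw [if_neg h2, if_neg h2, zero_mul]
  rw [Finset.sum_congr rfl (fun σ _ => hrw σ), Fintype.sum_prod_type]
  have hcol : ∀ s : S,
      (∑ c : ∀ i, A i, if c = a t then
          ρ t s * ∑ s' : S, P s (a t) s' * R i s (a t) s' else 0)
      = ρ t s * ∑ s' : S, P s (a t) s' * R i s (a t) s' := by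
    intro s
    rw [Finset.sum_ite_eq' Finset.univ]
    simp
  rw [Finset.sum_congr rfl (fun s _ => hcol s)]
  apply Finset.sum_congr rfl
  intro s _
  rw [Finset.mul_sum]
end

section
/- (Every AEC game with deterministic rewards has an equivalent POSG.) Let an AEC game with deterministic rewards be given, with finite state set S, agents 𝒩 = {0,1,…,N}, finite action sets A_i, deterministic transitions T_i (i ≥ 1), environment transition P with ∑_{s'} P(s,s') = 1, next-agent function ν with ∑_{j} ν(s,i,a,j) = 1, and deterministic reward values R*_i(s, j, a, s') ∈ ℝ. Construct the POSG with state set S'' = S × 𝒩, transition function P''((s,i), a, (s',i')) = ν(s,i,a_i,i') · Pr(s' | s, i, a_i), and reward functions R''_i((s,j), a, (s',j')) = R*_i(s, j, a_j, s'). Then: (a) P'' satisfies ∑_{(s',i')} P''((s,i),a,(s',i')) = 1 for all (s,i) and a, so the construction is a valid POSG; (b) for every (s,i) ∈ S'', every joint action a, and every (s',i') ∈ S'', the probability under one POSG step from (s,i) with joint action a of reaching (s',i') equals the probability in the AEC game that, when agent i acts with action a_i in state s, the state transitions to s' and the next agent to act is i', namely Pr(s' | s, i, a_i) · ν(s, i,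 a_i, i'); and (c) the reward each agent i receives on that POSG step equals the reward R*_i(s, j, a_j, s') that agent i receives in the corresponding AEC step with acting agent j. -/
/-!
STATEMENT 5 (Every AEC game with deterministic rewards has an equivalent
POSG): with the POSG on `S'' = S × 𝒩` defined by
`P''((s,i), a, (s',i')) = ν(s,i,a_i,i') · Pr(s' | s, i, a_i)` and
`R''_i((s,j), a, (s',j')) = R*_i(s, j, a_j, s')`,
(a) `P''` sums to 1 over next states, so the construction is a valid POSG;
(b) each one-step POSG transition probability equals the corresponding AEC
probability `Pr(s' | s, i, a_i) · ν(s, i, a_i, i')` that the state becomes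
`s'` and the next agent is `i'` when agent `i` acts with `a_i` in `s`;
(c) the reward each agent receives on that POSG step equals the
deterministic reward of the corresponding AEC step with acting agent `j`.
-/

open Finset

theorem aec_deterministic_rewards_to_posg
    {S : Type*} [Fintype S] [DecidableEq S] {N : ℕ}
    {A : Fin (N + 1) → Type*} [∀ i, Fintype (A i)]
    -- agent 0 is the environment, with a single null action
    [Unique (A 0)]
    -- deterministic transition functions for the agents (used for i ≠ 0)
    (T : ∀ i : Fin (N + 1), S → A i → S)
    -- stochastic environment transition
    (P : S → S → ℝ)
    (hP0 : ∀ s s', 0 ≤ P s s') (hP1 : ∀ s s', P s s' ≤ 1)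
    (hPsum : ∀ s, ∑ s' : S, P s s' = 1)
    -- next-agent function ν(s, i, a, j) for a ∈ A i
    (ν : S → ∀ i : Fin (N + 1), A i → Fin (N + 1) → ℝ)
    (hν0 : ∀ s i a j, 0 ≤ ν s i a j) (hν1 : ∀ s i a j, ν s i a j ≤ 1)
    (hνsum : ∀ s i a, ∑ j : Fin (N + 1), ν s i a j = 1)
    -- deterministic reward values R*_i(s, j, a, s') for each agent i ∈ [N]
    (Rstar : Fin N → S → (j : Fin (N + 1)) → A j → S → ℝ) :
    -- Pr(s' | s, i, a): indicator [T_i(s,a) = s'] for i ≠ 0, and P(s,s') for i = 0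
    let Pr : S → (i : Fin (N + 1)) → A i → S → ℝ := fun s i a s' =>
      if i = 0 then P s s' else (if T i s a = s' then 1 else 0)
    -- the constructed POSG transition function on S'' = S × 𝒩
    let P'' : S × Fin (N + 1) → (∀ i, A i) → S × Fin (N + 1) → ℝ :=
      fun σ a σ' => ν σ.1 σ.2 (a σ.2) σ'.2 * Pr σ.1 σ.2 (a σ.2) σ'.1
    -- the constructed POSG reward functions R''_i((s,j), a, (s',j')) = R*_i(s,j,a_j,s')
    let R'' : Fin N → S × Fin (N + 1) → (∀ i, A i) → S × Fin (N + 1) → ℝ :=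
      fun i σ a σ' => Rstar i σ.1 σ.2 (a σ.2) σ'.1
    -- (a) valid POSG transition function
    (∀ (σ : S × Fin (N + 1)) (a : ∀ i, A i),
        ∑ σ' : S × Fin (N + 1), P'' σ a σ' = 1) ∧
    -- (b) one-step POSG probabilities match the AEC game's probabilities
    (∀ (s : S) (i : Fin (N + 1)) (a : ∀ i, A i) (s' : S) (i' : Fin (N + 1)),
        P'' (s, i) a (s', i') = Pr s i (a i) s' * ν s i (a i) i') ∧
    -- (c) POSG rewards match the AEC game's deterministic rewards
    (∀ (i : Fin N) (s : S) (j : Fin (N + 1)) (a : ∀ i, A i) (s' : S)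
        (j' : Fin (N + 1)),
        R'' i (s, j) a (s', j') = Rstar i s j (a j) s') := by
  intro Pr P'' R''
  refine ⟨?_, fun s i a s' i' => mul_comm _ _, fun _ _ _ _ _ _ => rfl⟩
  intro σ a
  rw [Fintype.sum_prod_type]
  have hPr : ∑ s' : S, Pr σ.1 σ.2 (a σ.2) s' = 1 := by
    by_cases h : σ.2 = 0
    · simp [Pr, h, hPsum]
    · simp [Pr, h]
  calc ∑ s' : S, ∑ i' : Fin (N+1), ν σ.1 σ.2 (a σ.2) i' * Pr σ.1 σ.2 (a σ.2) s'
      = (∑ s' : S, Pr σ.1 σ.2 (a σ.2) s') * (∑ i' : Fin (N+1), ν σ.1 σ.2 (a σ.2) i') := by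
        rw [Finset.sum_mul_sum]
        exact Finset.sum_congr rfl fun s' _ => Finset.sum_congr rfl fun i' _ => (mul_comm _ _)
    _ = 1 := by rw [hPr, hνsum]; ring
end

section
/- Let an AEC game be given with finite state set S, agents 𝒩 = {0,1,…,N}, finite action sets A_i, deterministic transitions T_i (i ≥ 1), environment transition P with ∑_{s'∈S} P(s,s') = 1, finite reward sets 𝓡₁,…,𝓡_N ⊆ ℝ, stochastic reward functions R_j with ∑_{r∈𝓡_j} R_j(s,i,a,s',r) = 1 for all s, i, a, s', and next-agent function ν with ∑_{j∈𝒩} ν(s,i,a,j) = 1. Define Pr(s' | s, i, a) = [T_i(s,a) = s'] if i ≥ 1 and = P(s,s') if i = 0. On the augmented state set S''' = S × 𝒩 × (𝓡₁ × ⋯ × 𝓡_N), define for each joint action a = (a₁,…,a_N): P'''((s, i, r), a, (s', i', r')) = ν(s, i, a_i, i') · Pr(s' | s, i, a_i) · ∏_{j=1}^{N} R_j(s, i, a_i, s', r'_j). Then P''' takes values in [0,1] and for every (s,i,r) ∈ S''' and every joint action a, ∑_{(s',i',r') ∈ S'''} P'''((s,i,r), a, (s',i',r')) = 1; that is, P'''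 is a valid POSG transition function on the reward-augmented state set. -/
open Finset

theorem aec_to_posg_reward_augmented_transition_valid
    {S : Type*} [Fintype S] [DecidableEq S] {N : ℕ}
    {A : Fin (N + 1) → Type*} [∀ i, Fintype (A i)]
    -- agent 0 is the environment, with a single null action
    [Unique (A 0)]
    -- deterministic transition functions for the agents (used for i ≠ 0)
    (T : ∀ i : Fin (N + 1), S → A i → S)
    -- stochastic environment transition
    (P : S → S → ℝ)
    (hP0 : ∀ s s', 0 ≤ P s s') (hP1 : ∀ s s', P s s' ≤ 1)
    (hPsum : ∀ s, ∑ s' : S, P s s' = 1)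
    -- next-agent function ν(s, i, a, j) for a ∈ A i
    (ν : S → ∀ i : Fin (N + 1), A i → Fin (N + 1) → ℝ)
    (hν0 : ∀ s i a j, 0 ≤ ν s i a j) (hν1 : ∀ s i a j, ν s i a j ≤ 1)
    (hνsum : ∀ s i a, ∑ j : Fin (N + 1), ν s i a j = 1)
    -- finite reward sets 𝓡_j ⊆ ℝ for the agents j ∈ [N]
    (Rew : Fin N → Finset ℝ)
    -- stochastic reward functions R_j(s, i, a, s', r) for a ∈ A i, r ∈ 𝓡_j
    (R : Fin N → S → (i : Fin (N + 1)) → A i → S → ℝ → ℝ)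
    (hR0 : ∀ j s i a s' r, 0 ≤ R j s i a s' r)
    (hR1 : ∀ j s i a s' r, R j s i a s' r ≤ 1)
    (hRsum : ∀ j s i a s', ∑ r ∈ Rew j, R j s i a s' r = 1) :
    -- Pr(s' | s, i, a): indicator [T_i(s,a) = s'] for i ≠ 0, and P(s,s') for i = 0
    let Pr : S → (i : Fin (N + 1)) → A i → S → ℝ := fun s i a s' =>
      if i = 0 then P s s' else (if T i s a = s' then 1 else 0)
    -- the constructed POSG transition function on S''' = S × 𝒩 × ∏_j 𝓡_j
    let P''' : S × Fin (N + 1) × (∀ j : Fin N, {x // x ∈ Rew j}) →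
        (∀ i, A i) → S × Fin (N + 1) × (∀ j : Fin N, {x // x ∈ Rew j}) → ℝ :=
      fun σ a σ' =>
        ν σ.1 σ.2.1 (a σ.2.1) σ'.2.1 * Pr σ.1 σ.2.1 (a σ.2.1) σ'.1 *
          ∏ j : Fin N, R j σ.1 σ.2.1 (a σ.2.1) σ'.1 (σ'.2.2 j : ℝ)
    (∀ (σ : S × Fin (N + 1) × (∀ j : Fin N, {x // x ∈ Rew j}))
        (a : ∀ i, A i) (σ' : S × Fin (N + 1) × (∀ j : Fin N, {x // x ∈ Rew j})),
        0 ≤ P''' σ a σ' ∧ P''' σ a σ' ≤ 1) ∧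
    (∀ (σ : S × Fin (N + 1) × (∀ j : Fin N, {x // x ∈ Rew j}))
        (a : ∀ i, A i),
        ∑ σ' : S × Fin (N + 1) × (∀ j : Fin N, {x // x ∈ Rew j}),
          P''' σ a σ' = 1) := by
  intro Pr P'''
  have hPr0 : ∀ s i a s', 0 ≤ Pr s i a s' := by
    intro s i a s'
    simp only [Pr]
    split
    · exact hP0 s s'
    · split <;> norm_num
  have hPr1 : ∀ s i a s', Pr s i a s' ≤ 1 := by
    intro s i a s'
    simp only [Pr]
    split
    · exact hP1 s s'
    · split <;> norm_num
  have hPrsum : ∀ s i a, ∑ s' : S, Pr s i a s' = 1 := by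
    intro s i a
    simp only [Pr]
    split
    · exact hPsum s
    · simp
  constructor
  · intro σ a σ'
    have hprod0 : 0 ≤ ∏ j : Fin N, R j σ.1 σ.2.1 (a σ.2.1) σ'.1 (σ'.2.2 j : ℝ) :=
      Finset.prod_nonneg fun j _ => hR0 _ _ _ _ _ _
    have hprod1 : ∏ j : Fin N, R j σ.1 σ.2.1 (a σ.2.1) σ'.1 (σ'.2.2 j : ℝ) ≤ 1 :=
      Finset.prod_le_one (fun j _ => hR0 _ _ _ _ _ _) (fun j _ => hR1 _ _ _ _ _ _)
    constructor
    · exact mul_nonneg (mul_nonneg (hν0 _ _ _ _) (hPr0 _ _ _ _)) hprod0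
    · exact mul_le_one₀ (mul_le_one₀ (hν1 _ _ _ _) (hPr0 _ _ _ _) (hPr1 _ _ _ _))
        hprod0 hprod1
  · intro σ a
    rw [Fintype.sum_prod_type]
    have key : ∀ s' : S,
        ∑ p : Fin (N + 1) × (∀ j : Fin N, {x // x ∈ Rew j}),
          P''' σ a (s', p) = Pr σ.1 σ.2.1 (a σ.2.1) s' := by
      intro s'
      rw [Fintype.sum_prod_type]
      have hr : ∑ r : (∀ j : Fin N, {x // x ∈ Rew j}),
          ∏ j : Fin N, R j σ.1 σ.2.1 (a σ.2.1) s' (r j : ℝ) = 1 := by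
        rw [← Fintype.prod_sum fun (j : Fin N) (x : {x // x ∈ Rew j}) => R j σ.1 σ.2.1 (a σ.2.1) s' (x : ℝ)]
        have : ∀ j : Fin N, ∑ x : {x // x ∈ Rew j},
            R j σ.1 σ.2.1 (a σ.2.1) s' (x : ℝ) = 1 := by
          intro j
          rw [Finset.sum_coe_sort (Rew j) (R j σ.1 σ.2.1 (a σ.2.1) s')]
          exact hRsum _ _ _ _ _
        exact Finset.prod_eq_one fun j _ => this j
      simp only [P''']
      calc ∑ i' : Fin (N + 1), ∑ r : (∀ j : Fin N, {x // x ∈ Rew j}),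
            ν σ.1 σ.2.1 (a σ.2.1) i' * Pr σ.1 σ.2.1 (a σ.2.1) s' *
              ∏ j : Fin N, R j σ.1 σ.2.1 (a σ.2.1) s' (r j : ℝ)
          = ∑ i' : Fin (N + 1), ν σ.1 σ.2.1 (a σ.2.1) i' * Pr σ.1 σ.2.1 (a σ.2.1) s' *
              (∑ r : (∀ j : Fin N, {x // x ∈ Rew j}),
                ∏ j : Fin N, R j σ.1 σ.2.1 (a σ.2.1) s' (r j : ℝ)) := by
            simp [Finset.mul_sum]
        _ = Pr σ.1 σ.2.1 (a σ.2.1) s' := by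
            rw [hr]
            simp [← Finset.sum_mul, hνsum]
    calc ∑ s' : S, ∑ p : Fin (N + 1) × (∀ j : Fin N, {x // x ∈ Rew j}),
          P''' σ a (s', p) = ∑ s' : S, Pr σ.1 σ.2.1 (a σ.2.1) s' := by
          exact Finset.sum_congr rfl fun s' _ => key s'
      _ = 1 := hPrsum _ _ _
end

section
/- (Every AEC game has an equivalent POSG.) Let an AEC game be given with finite state set S, agents 𝒩 = {0,1,…,N}, finite action sets A_i, deterministic transitions T_i (i ≥ 1), environment transition P with ∑_{s'} P(s,s') = 1, finite reward sets 𝓡_j, stochastic reward functions R_j with ∑_{r∈𝓡_j} R_j(s,i,a,s',r) = 1, and next-agent function ν with ∑_{j'} ν(s,i,a,j') = 1. Construct the POSG on S''' = S × 𝒩 × ∏_{j=1}^N 𝓡_j with transition function P'''((s,i,r), a, (s',i',r')) = ν(s,i,a_i,i') · Pr(s'|s,i,a_i) · ∏_{j=1}^N R_j(s,i,a_i,s',r'_j) and reward functions R'''_j((s,i,r), a, (s',i',r')) = r'_j. Then for every (s,i,r) ∈ S''' and joint action a: (a) the marginal of P''' over the (s',i') components, ∑_{r'} P'''((s,i,r),a,(s',i',r')),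 equals Pr(s' | s, i, a_i) · ν(s, i, a_i, i'), the AEC game's joint probability that the state transitions to s' and the next agent is i' when agent i takes action a_i in state s; and (b) for each agent j and each v ∈ 𝓡_j, the probability under P''' that the reward R'''_j received equals v, conditioned on the next state component being s' (assuming Pr(s'|s,i,a_i)·ν-mass positive), equals R_j(s, i, a_i, s', v), the probability that agent j receives reward v at the corresponding AEC step. Hence the constructed POSG reproduces the AEC game's joint one-step distribution of next state, next acting agent, and per-agent rewards. -/
/-!
STATEMENT 7 (Every AEC game has an equivalent POSG): for the POSG
constructed on `S''' = S × 𝒩 × ∏_j 𝓡_j` with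
`P'''((s,i,r), a, (s',i',r')) = ν(s,i,a_i,i') · Pr(s'|s,i,a_i) · ∏_j R_j(s,i,a_i,s',r'_j)`
and `R'''_j((s,i,r), a, (s',i',r')) = r'_j`:
(a) the marginal of `P'''` over the `(s', i')` components equals
`Pr(s' | s, i, a_i) · ν(s, i, a_i, i')`, the AEC game's joint probability
that the state transitions to `s'` and the next agent is `i'`;
(b) for each agent `j` and each `v ∈ 𝓡_j`, the probability under `P'''`
that the received reward `R'''_j` equals `v`, conditioned on the next state
component being `s'` (assuming that event has positive mass), equals
`R_j(s, i, a_i, s', v)`.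
-/

open Finset

lemma pi_sum_prod' {ι : Type*} [Fintype ι] [DecidableEq ι] {β : ι → Type*}
    [∀ i, Fintype (β i)] (f : ∀ i, β i → ℝ) :
    ∑ g : ∀ i, β i, ∏ i, f i (g i) = ∏ i, ∑ x, f i x := by
  rw [← Fintype.piFinset_univ, ← Finset.prod_univ_sum]


theorem aec_to_posg_equivalent
    {S : Type*} [Fintype S] [DecidableEq S] {N : ℕ}
    {A : Fin (N + 1) → Type*} [∀ i, Fintype (A i)]
    -- agent 0 is the environment, with a single null action
    [Unique (A 0)]
    -- deterministic transition functions for the agents (used for i ≠ 0)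
    (T : ∀ i : Fin (N + 1), S → A i → S)
    -- stochastic environment transition
    (P : S → S → ℝ)
    (hP0 : ∀ s s', 0 ≤ P s s') (hP1 : ∀ s s', P s s' ≤ 1)
    (hPsum : ∀ s, ∑ s' : S, P s s' = 1)
    -- next-agent function ν(s, i, a, j) for a ∈ A i
    (ν : S → ∀ i : Fin (N + 1), A i → Fin (N + 1) → ℝ)
    (hν0 : ∀ s i a j, 0 ≤ ν s i a j) (hν1 : ∀ s i a j, ν s i a j ≤ 1)
    (hνsum : ∀ s i a, ∑ j : Fin (N + 1), ν s i a j = 1)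
    -- finite reward sets 𝓡_j ⊆ ℝ for the agents j ∈ [N]
    (Rew : Fin N → Finset ℝ)
    -- stochastic reward functions R_j(s, i, a, s', r) for a ∈ A i, r ∈ 𝓡_j
    (R : Fin N → S → (i : Fin (N + 1)) → A i → S → ℝ → ℝ)
    (hR0 : ∀ j s i a s' r, 0 ≤ R j s i a s' r)
    (hR1 : ∀ j s i a s' r, R j s i a s' r ≤ 1)
    (hRsum : ∀ j s i a s', ∑ r ∈ Rew j, R j s i a s' r = 1) :
    -- Pr(s' | s, i, a): indicator [T_i(s,a) = s'] for i ≠ 0, and P(s,s') for i = 0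
    let Pr : S → (i : Fin (N + 1)) → A i → S → ℝ := fun s i a s' =>
      if i = 0 then P s s' else (if T i s a = s' then 1 else 0)
    -- the constructed POSG transition function on S''' = S × 𝒩 × ∏_j 𝓡_j
    let P''' : S × Fin (N + 1) × (∀ j : Fin N, {x // x ∈ Rew j}) →
        (∀ i, A i) → S × Fin (N + 1) × (∀ j : Fin N, {x // x ∈ Rew j}) → ℝ :=
      fun σ a σ' =>
        ν σ.1 σ.2.1 (a σ.2.1) σ'.2.1 * Pr σ.1 σ.2.1 (a σ.2.1) σ'.1 *
          ∏ j : Fin N, R j σ.1 σ.2.1 (a σ.2.1) σ'.1 (σ'.2.2 j : ℝ)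
    -- (a) the (s', i')-marginal of P''' reproduces the AEC game's joint
    -- one-step distribution of next state and next acting agent
    (∀ (s : S) (i : Fin (N + 1)) (r : ∀ j : Fin N, {x // x ∈ Rew j})
        (a : ∀ i, A i) (s' : S) (i' : Fin (N + 1)),
        (∑ r' : ∀ j : Fin N, {x // x ∈ Rew j}, P''' (s, i, r) a (s', i', r'))
          = Pr s i (a i) s' * ν s i (a i) i') ∧
    -- (b) conditioned on the next state component being s', the probability
    -- that the reward R'''_j = r'_j received by agent j equals v is
    -- R_j(s, i, a_i, s', v), the AEC game's reward probability
    (∀ (s : S) (i : Fin (N + 1)) (r : ∀ j : Fin N, {x // x ∈ Rew j})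
        (a : ∀ i, A i) (s' : S) (j : Fin N) (v : ℝ), v ∈ Rew j →
        0 < (∑ i' : Fin (N + 1), ∑ r' : ∀ j : Fin N, {x // x ∈ Rew j},
              P''' (s, i, r) a (s', i', r')) →
        (∑ i' : Fin (N + 1), ∑ r' : ∀ j : Fin N, {x // x ∈ Rew j},
            if (r' j : ℝ) = v then P''' (s, i, r) a (s', i', r') else 0) /
          (∑ i' : Fin (N + 1), ∑ r' : ∀ j : Fin N, {x // x ∈ Rew j},
            P''' (s, i, r) a (s', i', r'))
          = R j s i (a i) s' v) := by
  
  intro Pr P'''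
  have key : ∀ (s : S) (i : Fin (N + 1)) (a : A i) (s' : S),
      ∑ r' : ∀ j : Fin N, {x // x ∈ Rew j},
        ∏ k : Fin N, R k s i a s' (r' k : ℝ) = 1 := by
    intro s i a s'
    rw [pi_sum_prod' (fun k (x : {x // x ∈ Rew k}) => R k s i a s' (x : ℝ))]
    apply Finset.prod_eq_one
    intro k _
    rw [Finset.sum_coe_sort (Rew k) (fun x => R k s i a s' x)]
    exact hRsum k s i a s'
  have parta : ∀ (s : S) (i : Fin (N + 1)) (r : ∀ j : Fin N, {x // x ∈ Rew j})
      (a : ∀ i, A i) (s' : S) (i' : Fin (N + 1)),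
      (∑ r' : ∀ j : Fin N, {x // x ∈ Rew j}, P''' (s, i, r) a (s', i', r'))
        = Pr s i (a i) s' * ν s i (a i) i' := by
    intro s i r a s' i'
    show (∑ r' : ∀ j : Fin N, {x // x ∈ Rew j},
        ν s i (a i) i' * Pr s i (a i) s' * ∏ k : Fin N, R k s i (a i) s' (r' k : ℝ)) = _
    rw [← Finset.mul_sum, key, mul_one, mul_comm]
  refine ⟨parta, ?_⟩
  intro s i r a s' j v hv hpos
  have hden : (∑ i' : Fin (N + 1), ∑ r' : ∀ j : Fin N, {x // x ∈ Rew j},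
      P''' (s, i, r) a (s', i', r')) = Pr s i (a i) s' := by
    simp_rw [parta s i r a s']
    rw [← Finset.mul_sum, hνsum, mul_one]
  have hPrpos : 0 < Pr s i (a i) s' := hden ▸ hpos
  -- numerator
  have keyj : ∀ (i' : Fin (N + 1)),
      (∑ r' : ∀ j : Fin N, {x // x ∈ Rew j},
        if (r' j : ℝ) = v then P''' (s, i, r) a (s', i', r') else 0)
        = ν s i (a i) i' * Pr s i (a i) s' * R j s i (a i) s' v := by
    intro i'
    have h1 : ∀ r' : ∀ j : Fin N, {x // x ∈ Rew j},
        (if (r' j : ℝ) = v then P''' (s, i, r) a (s', i', r') else 0)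
          = ν s i (a i) i' * Pr s i (a i) s' *
            ∏ k : Fin N, (if k = j then (if ((r' k : ℝ) = v) then R k s i (a i) s' (r' k : ℝ) else 0)
              else R k s i (a i) s' (r' k : ℝ)) := by
      intro r'
      by_cases h : (r' j : ℝ) = v
      · rw [if_pos h]
        show ν s i (a i) i' * Pr s i (a i) s' * ∏ k : Fin N, R k s i (a i) s' (r' k : ℝ) = _
        congr 1
        apply Finset.prod_congr rfl
        intro k _
        by_cases hk : k = j
        · subst hk; rw [if_pos rfl, if_pos h]
        · rw [if_neg hk]
      · rw [if_neg h]
        rw [Finset.prod_eq_zero (Finset.mem_univ j) (by rw [if_pos rfl, if_neg h]), mul_zero]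
    simp_rw [h1]
    rw [← Finset.mul_sum,
      pi_sum_prod' (fun k (x : {x // x ∈ Rew k}) =>
        if k = j then (if ((x : ℝ) = v) then R k s i (a i) s' (x : ℝ) else 0)
        else R k s i (a i) s' (x : ℝ))]
    congr 1
    rw [Fintype.prod_eq_single j]
    · simp only [eq_self_iff_true, if_true]
      rw [Finset.sum_coe_sort (Rew j) (fun x => if x = v then R j s i (a i) s' x else 0)]
      rw [Finset.sum_ite_eq' (Rew j) v (fun x => R j s i (a i) s' x), if_pos hv]
    · intro k hk
      simp only [if_neg hk]
      rw [Finset.sum_coe_sort (Rew k) (fun x => R k s i (a i) s' x)]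
      exact hRsum k s i (a i) s'
  simp_rw [keyj]
  rw [← Finset.sum_mul, ← Finset.sum_mul, hνsum, one_mul, hden,
    mul_comm, mul_div_assoc, div_self (ne_of_gt hPrpos), mul_one]
end
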